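/- arXiv:1103.1966 — 5 statements merged into one kernel-verified Lean document; each statement's English description precedes it below -/
import Mathlib

section
/- Let $B$ be the cumulative distribution function of a Beta$(a,a)$ random variable with real parameter $a>1$. Then for all $t\in(0,0.5)$, the function $t\mapsto B(t)/t$ is strictly increasing and $B(t)<t$. -/
open Set

private lemma real_beta {a : ℝ} (ha : 0 < a) :
    Real.Gamma (2*a) * ∫ x in (0:ℝ)..1, x ^ (a - 1) * (1 - x) ^ (a - 1)
      = Real.Gamma a ^ 2 := by
  have key := Complex.Gamma_mul_Gamma_eq_betaIntegral (s := (a:ℂ)) (t := (a:ℂ))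
    (by simpa using ha) (by simpa using ha)
  have hint : Complex.betaIntegral a a
      = ((∫ x in (0:ℝ)..1, x ^ (a - 1) * (1 - x) ^ (a - 1) : ℝ) : ℂ) := by
    rw [Complex.betaIntegral, ← intervalIntegral.integral_ofReal]
    refine intervalIntegral.integral_congr fun x hx => ?_
    rw [uIcc_of_le zero_le_one] at hx
    push_cast
    rw [Complex.ofReal_cpow hx.1, Complex.ofReal_cpow (by linarith [hx.2])]
    push_cast; ring_nf
  rw [hint] at key
  have h2 : ((a:ℂ) + a) = ((2*a : ℝ) : ℂ) := by push_cast; ring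
  rw [h2, Complex.Gamma_ofReal, Complex.Gamma_ofReal, ← Complex.ofReal_mul,
    ← Complex.ofReal_mul] at key
  have := Complex.ofReal_injective key
  rw [← this]; ring

section aux
variable {a : ℝ} (ha : 1 < a)
include ha

private lemma f_intg {s t : ℝ} (hs : 0 ≤ s) (hst : s ≤ t) (ht1 : t ≤ 1) :
    IntervalIntegrable (fun x : ℝ => x ^ (a - 1) * (1 - x) ^ (a - 1))
      MeasureTheory.volume s t := by
  have hc : ContinuousOn (fun x : ℝ => x ^ (a - 1) * (1 - x) ^ (a - 1)) (Icc 0 1) := by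
    apply ContinuousOn.mul
    · exact continuousOn_id.rpow_const fun x _ => Or.inr (by linarith)
    · exact (continuousOn_const.sub continuousOn_id).rpow_const fun x _ => Or.inr (by linarith)
  apply (hc.mono ?_).intervalIntegrable
  rw [uIcc_of_le hst]
  exact Icc_subset_Icc hs ht1

private lemma f_mono {x y : ℝ} (hx : 0 ≤ x) (hxy : x ≤ y) (hy : y ≤ 1/2) :
    x ^ (a - 1) * (1 - x) ^ (a - 1) ≤ y ^ (a - 1) * (1 - y) ^ (a - 1) := by
  rw [← Real.mul_rpow hx (by linarith), ← Real.mul_rpow (by linarith) (by linarith)]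
  exact Real.rpow_le_rpow (by nlinarith) (by nlinarith) (by linarith)

private lemma f_strict {x y : ℝ} (hx : 0 ≤ x) (hxy : x < y) (hy : y ≤ 1/2) :
    x ^ (a - 1) * (1 - x) ^ (a - 1) < y ^ (a - 1) * (1 - y) ^ (a - 1) := by
  rw [← Real.mul_rpow hx (by linarith), ← Real.mul_rpow (by linarith) (by linarith)]
  exact Real.rpow_lt_rpow (by nlinarith) (by nlinarith) (by linarith)

private lemma int_lt {s : ℝ} (hs : 0 < s) (hs2 : s ≤ 1/2) :
    (∫ x in (0:ℝ)..s, x ^ (a - 1) * (1 - x) ^ (a - 1)) < s * (s ^ (a - 1) * (1 - s) ^ (a - 1)) := by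
  set f : ℝ → ℝ := fun x => x ^ (a - 1) * (1 - x) ^ (a - 1) with hf
  have hm : (0:ℝ) < s/2 := by linarith
  have hsplit : (∫ x in (0:ℝ)..s, f x)
      = (∫ x in (0:ℝ)..s/2, f x) + ∫ x in (s/2)..s, f x := by
    rw [intervalIntegral.integral_add_adjacent_intervals
      (f_intg ha le_rfl (by linarith) (by linarith))
      (f_intg ha (by linarith) (by linarith) (by linarith))]
  have h1 : (∫ x in (0:ℝ)..s/2, f x) ≤ (s/2 - 0) * f (s/2) := by
    have h := intervalIntegral.integral_mono_on (by linarith : (0:ℝ) ≤ s/2)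
      (f_intg ha le_rfl (by linarith) (by linarith))
      (intervalIntegrable_const (c := f (s/2)))
      (fun x hx => f_mono ha hx.1 hx.2 (by linarith))
    rwa [intervalIntegral.integral_const, smul_eq_mul] at h
  have h2 : (∫ x in (s/2)..s, f x) ≤ (s - s/2) * f s := by
    have h := intervalIntegral.integral_mono_on (by linarith : s/2 ≤ s)
      (f_intg ha (by linarith) (by linarith) (by linarith))
      (intervalIntegrable_const (c := f s))
      (fun x hx => f_mono ha (by linarith [hx.1]) hx.2 hs2)
    rwa [intervalIntegral.integral_const, smul_eq_mul] at h
  have h3 : f (s/2) < f s := f_strict ha (by linarith) (by linarith) hs2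
  have h4 : (s/2) * f (s/2) < (s/2) * f s := (mul_lt_mul_iff_right₀ hm).mpr h3
  have : (∫ x in (0:ℝ)..s, f x) ≤ (s/2 - 0) * f (s/2) + (s - s/2) * f s := by
    rw [hsplit]; exact add_le_add h1 h2
  have hfin : (∫ x in (0:ℝ)..s, f x) < s * f s := by nlinarith
  exact hfin

private lemma ratio_lt {s t : ℝ} (hs : 0 < s) (hst : s < t) (ht2 : t ≤ 1/2) :
    (∫ x in (0:ℝ)..s, x ^ (a - 1) * (1 - x) ^ (a - 1)) / s
      < (∫ x in (0:ℝ)..t, x ^ (a - 1) * (1 - x) ^ (a - 1)) / t := by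
  set f : ℝ → ℝ := fun x => x ^ (a - 1) * (1 - x) ^ (a - 1) with hf
  have ht : 0 < t := lt_trans hs hst
  rw [div_lt_div_iff₀ hs ht]
  have hsplit : (∫ x in (0:ℝ)..t, f x)
      = (∫ x in (0:ℝ)..s, f x) + ∫ x in s..t, f x := by
    rw [intervalIntegral.integral_add_adjacent_intervals
      (f_intg ha le_rfl (by linarith) (by linarith))
      (f_intg ha (by linarith) (by linarith) (by linarith))]
  have hlow : (t - s) * f s ≤ ∫ x in s..t, f x := by
    have h := intervalIntegral.integral_mono_on (le_of_lt hst)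
      (intervalIntegrable_const (c := f s))
      (f_intg ha (by linarith) (by linarith) (by linarith))
      (fun x hx => f_mono ha (by linarith [hx.1]) hx.1 (by linarith [hx.2]))
    rwa [intervalIntegral.integral_const, smul_eq_mul] at h
  have hkey : (∫ x in (0:ℝ)..s, f x) < s * f s := int_lt ha hs (by linarith)
  have h1 : (∫ x in (0:ℝ)..s, f x) * (t - s) < s * ((t - s) * f s) := by nlinarith
  have h2 : s * ((t - s) * f s) ≤ s * ∫ x in s..t, f x :=
    mul_le_mul_of_nonneg_left hlow (le_of_lt hs)
  rw [hsplit]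
  nlinarith

private lemma half_int :
    (∫ x in (0:ℝ)..(1/2), x ^ (a - 1) * (1 - x) ^ (a - 1))
      = (1/2) * ∫ x in (0:ℝ)..1, x ^ (a - 1) * (1 - x) ^ (a - 1) := by
  set f : ℝ → ℝ := fun x => x ^ (a - 1) * (1 - x) ^ (a - 1) with hf
  have hfs : ∀ x : ℝ, f (1 - x) = f x := fun x => by
    simp only [hf, sub_sub_cancel]; ring
  have hsym : (∫ x in (1/2:ℝ)..1, f x) = ∫ x in (0:ℝ)..(1/2), f x := by
    calc (∫ x in (1/2:ℝ)..1, f x) = ∫ x in (1/2:ℝ)..1, f (1 - x) :=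
          intervalIntegral.integral_congr fun x _ => (hfs x).symm
      _ = ∫ x in (1-1:ℝ)..(1-1/2), f x := intervalIntegral.integral_comp_sub_left f 1
      _ = ∫ x in (0:ℝ)..(1/2), f x := by norm_num
  have hsplit : (∫ x in (0:ℝ)..1, f x)
      = (∫ x in (0:ℝ)..(1/2), f x) + ∫ x in (1/2:ℝ)..1, f x := by
    rw [intervalIntegral.integral_add_adjacent_intervals
      (f_intg ha le_rfl (by norm_num) (by norm_num))
      (f_intg ha (by norm_num) (by norm_num) (by norm_num))]
  rw [hsplit, hsym]; ring

end aux

/-- The CDF of the Beta(a,a) distribution on (0,1). -/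
noncomputable def betaCDF (a t : ℝ) : ℝ :=
  (Real.Gamma (2 * a) / (Real.Gamma a) ^ 2) * ∫ x in (0:ℝ)..t, x ^ (a - 1) * (1 - x) ^ (a - 1)

/-- Lemma 1(I): for `a > 1`, on `(0, 0.5)` the function `t ↦ B(t)/t` is strictly
increasing and `B(t) < t`. -/
theorem betaCDF_div_strictMono_and_lt {a : ℝ} (ha : 1 < a) :
    StrictMonoOn (fun t => betaCDF a t / t) (Ioo (0:ℝ) 0.5) ∧
      ∀ t ∈ Ioo (0:ℝ) 0.5, betaCDF a t < t := by
  have ha0 : (0:ℝ) < a := by linarith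
  have hC : 0 < Real.Gamma (2 * a) / (Real.Gamma a) ^ 2 :=
    div_pos (Real.Gamma_pos_of_pos (by linarith)) (pow_pos (Real.Gamma_pos_of_pos ha0) 2)
  have hhalf : (0.5 : ℝ) = 1/2 := by norm_num
  set C := Real.Gamma (2 * a) / (Real.Gamma a) ^ 2 with hCdef
  have hB : ∀ t : ℝ, 0 < t →
      betaCDF a t / t = C * ((∫ x in (0:ℝ)..t, x ^ (a - 1) * (1 - x) ^ (a - 1)) / t) := by
    intro t ht; rw [betaCDF, mul_div_assoc]
  have hratio : ∀ s t : ℝ, 0 < s → s < t → t ≤ 1/2 →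
      betaCDF a s / s < betaCDF a t / t := by
    intro s t hs hst ht2
    rw [hB s hs, hB t (lt_trans hs hst)]
    exact (mul_lt_mul_iff_right₀ hC).mpr (ratio_lt ha hs hst ht2)
  constructor
  · intro s hs t ht hst
    exact hratio s t hs.1 hst (by rw [hhalf] at ht; linarith [ht.2])
  · intro t ht
    rw [hhalf] at ht
    have h1 : betaCDF a t / t < betaCDF a (1/2) / (1/2) :=
      hratio t (1/2) ht.1 ht.2 le_rfl
    have h2 : betaCDF a (1/2) / (1/2) = 1 := by
      rw [betaCDF, half_int ha]
      have hg : Real.Gamma a ^ 2 ≠ 0 := by positivity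
      field_simp [hCdef]
      nlinarith [real_beta ha0]
    rw [h2] at h1
    exact (div_lt_one ht.1).mp h1
end

section
/- Let $B$ be the CDF of a Beta$(a,a)$ random variable with $a>1$. For any $t_1\in(0,0.5]$ and $t_2\in[t_1,1]$, one has $B(t_1)/t_1 \le B(t_2)/t_2$. -/
open Set

namespace BetaAux

noncomputable def g (a x : ℝ) : ℝ := x ^ (a - 1) * (1 - x) ^ (a - 1)

lemma g_cont {a : ℝ} (ha : 1 < a) : Continuous (g a) := by
  have hp : (0:ℝ) ≤ a - 1 := by linarith
  exact (Real.continuous_rpow_const hp).mul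
    ((Real.continuous_rpow_const hp).comp (continuous_const.sub continuous_id))

lemma g_intInt {a : ℝ} (ha : 1 < a) (c d : ℝ) :
    IntervalIntegrable (g a) MeasureTheory.volume c d :=
  (g_cont ha).intervalIntegrable c d

lemma g_eq {a x : ℝ} (hx : 0 ≤ x) (hx' : x ≤ 1) :
    g a x = (x * (1 - x)) ^ (a - 1) := by
  rw [g, Real.mul_rpow hx (by linarith)]

lemma g_mono {a : ℝ} (ha : 1 < a) {x y : ℝ} (hx : 0 ≤ x) (hxy : x ≤ y)
    (hy : y ≤ 1 / 2) : g a x ≤ g a y := by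
  rw [g_eq hx (by linarith), g_eq (le_trans hx hxy) (by linarith)]
  apply Real.rpow_le_rpow (by nlinarith) (by nlinarith) (by linarith)

lemma g_nonneg {a x : ℝ} (hx : 0 ≤ x) (hx' : x ≤ 1) : 0 ≤ g a x := by
  rw [g_eq hx hx']
  exact Real.rpow_nonneg (by nlinarith) _

/-- the core Chebyshev-type inequality -/
lemma core {a : ℝ} (ha : 1 < a) {s t : ℝ} (hs : 0 < s) (hst : s ≤ t)
    (ht : t ≤ 1 / 2) :
    t * ∫ x in (0:ℝ)..s, g a x ≤ s * ∫ x in (0:ℝ)..t, g a x := by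
  have hsplit : (∫ x in (0:ℝ)..t, g a x)
      = (∫ x in (0:ℝ)..s, g a x) + ∫ x in s..t, g a x :=
    (intervalIntegral.integral_add_adjacent_intervals (g_intInt ha 0 s)
      (g_intInt ha s t)).symm
  have h1 : (∫ x in (0:ℝ)..s, g a x) ≤ s * g a s := by
    have := intervalIntegral.integral_mono_on hs.le (g_intInt ha 0 s)
      (intervalIntegrable_const) (fun x hx => g_mono ha hx.1 hx.2 (by linarith))
    simpa [smul_eq_mul] using this
  have h2 : (t - s) * g a s ≤ ∫ x in s..t, g a x := by
    have := intervalIntegral.integral_mono_on hst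
      (intervalIntegrable_const) (g_intInt ha s t)
      (fun x hx => g_mono ha hs.le hx.1 (le_trans hx.2 ht))
    simpa [smul_eq_mul] using this
  have hg : 0 ≤ g a s := g_nonneg hs.le (by linarith)
  nlinarith [h1, h2]

lemma symm_int {a : ℝ} (ha : 1 < a) (t : ℝ) :
    (∫ x in t..1, g a x) = ∫ x in (0:ℝ)..(1 - t), g a x := by
  have : (∫ x in (0:ℝ)..(1 - t), g a (1 - x)) = ∫ x in (1 - (1-t))..(1 - 0), g a x :=
    intervalIntegral.integral_comp_sub_left (g a) 1
  simp only [sub_sub_cancel, sub_zero] at this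
  rw [← this]
  apply intervalIntegral.integral_congr
  intro x _
  simp [g, sub_sub_cancel, mul_comm]

lemma total {a : ℝ} (ha : 1 < a) :
    (∫ x in (0:ℝ)..1, g a x) = Real.Gamma a ^ 2 / Real.Gamma (2 * a) := by
  have ha0 : (0:ℝ) < a := by linarith
  have hbeta : Complex.Gamma a * Complex.Gamma a
      = Complex.Gamma (a + a) * Complex.betaIntegral a a :=
    Complex.Gamma_mul_Gamma_eq_betaIntegral (by simpa using ha0) (by simpa using ha0)
  have hre : Complex.betaIntegral a a = ((∫ x in (0:ℝ)..1, g a x : ℝ) : ℂ) := by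
    rw [Complex.betaIntegral, ← intervalIntegral.integral_ofReal]
    apply intervalIntegral.integral_congr
    intro x hx
    rw [uIcc_of_le (by norm_num)] at hx
    push_cast
    rw [g, Complex.ofReal_mul, Complex.ofReal_cpow hx.1,
      Complex.ofReal_cpow (by linarith [hx.2] : (0:ℝ) ≤ 1 - x)]
    push_cast
    ring
  rw [hre, Complex.Gamma_ofReal, ← Complex.ofReal_add, Complex.Gamma_ofReal] at hbeta
  have h2a : a + a = 2 * a := by ring
  rw [h2a] at hbeta
  have hG2 : Real.Gamma (2 * a) ≠ 0 := (Real.Gamma_pos_of_pos (by linarith)).ne'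
  have : Real.Gamma a * Real.Gamma a
      = Real.Gamma (2 * a) * ∫ x in (0:ℝ)..1, g a x := by
    exact_mod_cast hbeta
  field_simp
  linarith [this]

lemma half {a : ℝ} (ha : 1 < a) :
    (∫ x in (0:ℝ)..(1/2 : ℝ), g a x)
      = Real.Gamma a ^ 2 / Real.Gamma (2 * a) / 2 := by
  have hsplit : (∫ x in (0:ℝ)..1, g a x)
      = (∫ x in (0:ℝ)..(1/2:ℝ), g a x) + ∫ x in (1/2:ℝ)..1, g a x :=
    (intervalIntegral.integral_add_adjacent_intervals (g_intInt ha 0 (1/2))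
      (g_intInt ha (1/2) 1)).symm
  have hsym : (∫ x in (1/2:ℝ)..1, g a x) = ∫ x in (0:ℝ)..(1/2:ℝ), g a x := by
    have := symm_int ha (1/2)
    norm_num at this
    exact this
  rw [total ha, hsym] at hsplit
  linarith

end BetaAux

open BetaAux

namespace BetaAux

lemma betaCDF_def (a t : ℝ) :
    betaCDF a t = (Real.Gamma (2 * a) / (Real.Gamma a) ^ 2) * ∫ x in (0:ℝ)..t, g a x := rfl

lemma C_pos {a : ℝ} (ha : 1 < a) :
    0 < Real.Gamma (2 * a) / (Real.Gamma a) ^ 2 :=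
  div_pos (Real.Gamma_pos_of_pos (by linarith))
    (pow_pos (Real.Gamma_pos_of_pos (by linarith)) 2)

lemma betaCDF_half {a : ℝ} (ha : 1 < a) : betaCDF a (1/2) = 1/2 := by
  have hG : Real.Gamma a ^ 2 ≠ 0 := (pow_pos (Real.Gamma_pos_of_pos (by linarith)) 2).ne'
  have hG2 : Real.Gamma (2 * a) ≠ 0 := (Real.Gamma_pos_of_pos (by linarith)).ne'
  rw [betaCDF_def, half ha]
  field_simp

lemma betaCDF_one {a : ℝ} (ha : 1 < a) : betaCDF a 1 = 1 := by
  have hG : Real.Gamma a ^ 2 ≠ 0 := (pow_pos (Real.Gamma_pos_of_pos (by linarith)) 2).ne'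
  have hG2 : Real.Gamma (2 * a) ≠ 0 := (Real.Gamma_pos_of_pos (by linarith)).ne'
  rw [betaCDF_def, total ha]
  field_simp

lemma betaCDF_le_self {a : ℝ} (ha : 1 < a) {s : ℝ} (hs : 0 ≤ s) (hs2 : s ≤ 1/2) :
    betaCDF a s ≤ s := by
  rcases eq_or_lt_of_le hs with h | h
  · simp [betaCDF_def, ← h]
  · have hcore := core ha h (le_refl s) hs2  -- not what we need
    have hcore2 := core ha h hs2 (le_refl (1/2))
    have hC := C_pos (a := a) ha
    have hhalf := betaCDF_half ha
    rw [betaCDF_def] at hhalf ⊢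
    nlinarith [hcore2, hC]

lemma betaCDF_symm {a : ℝ} (ha : 1 < a) (t : ℝ) :
    betaCDF a t = 1 - betaCDF a (1 - t) := by
  have hsplit : (∫ x in (0:ℝ)..1, g a x)
      = (∫ x in (0:ℝ)..t, g a x) + ∫ x in t..1, g a x :=
    (intervalIntegral.integral_add_adjacent_intervals (g_intInt ha 0 t)
      (g_intInt ha t 1)).symm
  have hsym := symm_int ha t
  have h1 := betaCDF_one ha
  rw [betaCDF_def] at h1
  rw [hsplit, hsym] at h1
  rw [betaCDF_def, betaCDF_def]
  linear_combination h1

end BetaAux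

/-- Lemma 1(III): for `a > 1`, `t₁ ∈ (0, 0.5]` and `t₂ ∈ [t₁, 1]`,
`B(t₁)/t₁ ≤ B(t₂)/t₂`. -/
theorem betaCDF_div_mono {a : ℝ} (ha : 1 < a) {t₁ t₂ : ℝ}
    (h₁ : t₁ ∈ Ioc (0:ℝ) 0.5) (h₂ : t₂ ∈ Icc t₁ 1) :
    betaCDF a t₁ / t₁ ≤ betaCDF a t₂ / t₂ := by
  obtain ⟨ht1, ht1'⟩ := h₁
  obtain ⟨ht12, ht2⟩ := h₂
  have ht1' : t₁ ≤ 1/2 := by norm_num at ht1'; linarith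
  have ht2pos : 0 < t₂ := lt_of_lt_of_le ht1 ht12
  have hC := BetaAux.C_pos (a := a) ha
  rw [div_le_div_iff₀ ht1 ht2pos]
  rcases le_or_gt t₂ (1/2) with hc | hc
  · have := BetaAux.core ha ht1 ht12 hc
    rw [BetaAux.betaCDF_def, BetaAux.betaCDF_def]
    nlinarith [this]
  · -- betaCDF a t₁ ≤ t₁ and t₂ ≤ betaCDF a t₂
    have hA : betaCDF a t₁ ≤ t₁ := BetaAux.betaCDF_le_self ha ht1.le ht1'
    have hB : t₂ ≤ betaCDF a t₂ := by
      rw [BetaAux.betaCDF_symm ha t₂]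
      have : betaCDF a (1 - t₂) ≤ 1 - t₂ :=
        BetaAux.betaCDF_le_self ha (by linarith) (by linarith)
      linarith
    have hApos : 0 ≤ betaCDF a t₁ := by
      rw [BetaAux.betaCDF_def]
      have : 0 ≤ ∫ x in (0:ℝ)..t₁, BetaAux.g a x := by
        apply intervalIntegral.integral_nonneg ht1.le
        intro x hx
        exact BetaAux.g_nonneg hx.1 (by linarith [hx.2])
      positivity
    nlinarith [hA, hB, hApos]
end

section
/- Let $f,g:(a,b)\to\mathbb{R}$ be differentiable with $g(x)\ne 0$ on $(a,b)$, and suppose $f/g$ is nonincreasing on $(a,b)$. Let $C>0$ be such that $g(x)+C\ne 0$ for all $x\in(a,b)$. If $f'(x)\le g'(x)$ for all $x\in(a,b)$, then $x\mapsto (f(x)+C)/(g(x)+C)$ is a decreasing function on $(a,b)$. -/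
/-!
The derivative of `(f + C) / (g + C)` has numerator
`f' (g + C) - (f + C) g' = (f' g - f g') + C (f' - g')`.
The first summand is the numerator of `(f / g)'`, which is `≤ 0` because `f / g` is antitone,
and the second is `≤ 0` because `C > 0` and `f' ≤ g'`.
-/

open Set

section Order

variable {𝕜 : Type*} [NontriviallyNormedField 𝕜] [LinearOrder 𝕜] [IsStrictOrderedRing 𝕜]
  [OrderTopology 𝕜] {g : 𝕜 → 𝕜} {s : Set 𝕜} {x : 𝕜}

lemma AntitoneOn.deriv_nonpos_of_isOpen (hg : AntitoneOn g s) (hs : IsOpen s) (hx : x ∈ s) :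
    deriv g x ≤ 0 := by
  rw [← derivWithin_of_isOpen hs hx]
  exact hg.derivWithin_nonpos

end Order

lemma AntitoneOn.deriv_mul_sub_mul_deriv_nonpos {f g : ℝ → ℝ} {s : Set ℝ} {x : ℝ}
    (hfg : AntitoneOn (fun y => f y / g y) s) (hs : IsOpen s) (hx : x ∈ s)
    (hf : DifferentiableAt ℝ f x) (hg : DifferentiableAt ℝ g x) (hg0 : g x ≠ 0) :
    deriv f x * g x - f x * deriv g x ≤ 0 := by
  have hquot : HasDerivAt (fun y => f y / g y)
      ((deriv f x * g x - f x * deriv g x) / g x ^ 2) x :=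
    hf.hasDerivAt.div hg.hasDerivAt hg0
  have hnonpos := hfg.deriv_nonpos_of_isOpen hs hx
  rwa [hquot.deriv, div_le_iff₀ (pow_two_pos_of_ne_zero hg0), zero_mul] at hnonpos

lemma mul_add_sub_add_mul_nonpos {f g f' g' C : ℝ} (hquot : f' * g - f * g' ≤ 0) (hC : 0 ≤ C)
    (hderiv : f' ≤ g') : f' * (g + C) - (f + C) * g' ≤ 0 := by
  have hsplit : f' * (g + C) - (f + C) * g' = (f' * g - f * g') + C * (f' - g') := by ring
  rw [hsplit]
  exact add_nonpos hquot (mul_nonpos_of_nonneg_of_nonpos hC (sub_nonpos.2 hderiv))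

/-- Lemma 2: if `f/g` is nonincreasing on `(a,b)`, `g ≠ 0` and `g + C ≠ 0` on `(a,b)`,
`C > 0`, and `f' ≤ g'` on `(a,b)`, then `(f+C)/(g+C)` is decreasing (nonincreasing) on
`(a,b)`. -/
theorem ratio_shift_antitone {a b : ℝ} {f g : ℝ → ℝ}
    (hf : ∀ x ∈ Ioo a b, DifferentiableAt ℝ f x)
    (hg : ∀ x ∈ Ioo a b, DifferentiableAt ℝ g x)
    (hg0 : ∀ x ∈ Ioo a b, g x ≠ 0)
    (hmono : AntitoneOn (fun x => f x / g x) (Ioo a b))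
    {C : ℝ} (hC : 0 < C)
    (hgC : ∀ x ∈ Ioo a b, g x + C ≠ 0)
    (hderiv : ∀ x ∈ Ioo a b, deriv f x ≤ deriv g x) :
    AntitoneOn (fun x => (f x + C) / (g x + C)) (Ioo a b) := by
  have hshift : ∀ x ∈ Ioo a b, HasDerivAt (fun y => (f y + C) / (g y + C))
      ((deriv f x * (g x + C) - (f x + C) * deriv g x) / (g x + C) ^ 2) x := fun x hx =>
    ((hf x hx).hasDerivAt.add_const C).div ((hg x hx).hasDerivAt.add_const C) (hgC x hx)
  refine antitoneOn_of_hasDerivWithinAt_nonpos (convex_Ioo a b)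
    (fun x hx => (hshift x hx).continuousAt.continuousWithinAt)
    (by simpa only [interior_Ioo] using fun x hx => (hshift x hx).hasDerivWithinAt) ?_
  rw [interior_Ioo]
  intro x hx
  refine div_nonpos_of_nonpos_of_nonneg (mul_add_sub_add_mul_nonpos ?_ hC.le (hderiv x hx))
    (sq_nonneg _)
  exact hmono.deriv_mul_sub_mul_deriv_nonpos isOpen_Ioo hx (hf x hx) (hg x hx) (hg0 x hx)
end

section
/- For any constant $C>\log 4$, the function $h(x) = \frac{10 - 15 e^{C} x + 6 e^{2C} x^2}{10 - 15 x + 6 x^2}$ is decreasing in $x$ on the interval $(0, e^{-C})$. -/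
open Set Real

/-- Lemma 3: for any `C > log 4`, the function
`h(x) = (10 - 15 e^C x + 6 e^{2C} x²)/(10 - 15 x + 6 x²)` is decreasing on `(0, e^{-C})`. -/
theorem lemma3_decreasing {C : ℝ} (hC : Real.log 4 < C) :
    StrictAntiOn
      (fun x => (10 - 15 * Real.exp C * x + 6 * Real.exp (2 * C) * x ^ 2)
        / (10 - 15 * x + 6 * x ^ 2))
      (Ioo (0:ℝ) (Real.exp (-C))) := by
  intro x hx y hy hxy
  set a := Real.exp C with ha
  have ha4 : (4:ℝ) < a := by
    have := Real.exp_lt_exp.mpr hC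
    rwa [Real.exp_log (by norm_num : (0:ℝ) < 4)] at this
  have ha2 : Real.exp (2 * C) = a ^ 2 := by
    rw [two_mul, Real.exp_add]; ring
  have hax : a * x < 1 := by
    have h1 : a * x < a * Real.exp (-C) :=
      mul_lt_mul_of_pos_left hx.2 (Real.exp_pos C)
    rwa [← Real.exp_add, add_neg_cancel, Real.exp_zero] at h1
  have hay : a * y < 1 := by
    have h1 : a * y < a * Real.exp (-C) :=
      mul_lt_mul_of_pos_left hy.2 (Real.exp_pos C)
    rwa [← Real.exp_add, add_neg_cancel, Real.exp_zero] at h1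
  have hx0 : 0 < x := hx.1
  have hy0 : 0 < y := hy.1
  have hDx : 0 < 10 - 15 * x + 6 * x ^ 2 := by nlinarith [sq_nonneg (4 * x - 5)]
  have hDy : 0 < 10 - 15 * y + 6 * y ^ 2 := by nlinarith [sq_nonneg (4 * y - 5)]
  simp only [ha2]
  rw [div_lt_div_iff₀ hDy hDx]
  -- difference factors as 30 (y-x)(a-1)(5 + 3 a x y - 2(a+1)(x+y))
  have hbr : 0 < 5 + 3 * a * x * y - 2 * (a + 1) * (x + y) := by
    have h1 : x < 1 / 4 := by nlinarith
    have h2 : y < 1 / 4 := by nlinarith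
    nlinarith [mul_pos hx0 hy0, mul_pos (mul_pos (Real.exp_pos C) hx0) hy0]
  nlinarith [mul_pos (mul_pos (sub_pos.mpr hxy) (by linarith : (0:ℝ) < a - 1)) hbr]
end

section
/- In the exponential example with $G_0^*$ the Beta$(3,3)$ CDF and $G_1^*(t)=G_0^*(\min(te^C,1))$ for $C>\log 4$: $\sup_{t\in(0,e^{-C}]} G_1^*(t)/G_0^*(t) = \lim_{t\to0+} G_1^*(t)/G_0^*(t) = e^{3C}$. -/
/-!
On `(0, e^{-C}]` the argument `t e^C` stays in `[0, 1]`, so the ratio is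
`e^{3C} q(t e^C) / q(t)` with `q(x) = 10 - 15x + 6x²` the cofactor of `t³` in the Beta(3,3) CDF.
Since `C > 0` we have `t ≤ t e^C ≤ 1`, and `q` is positive and decreasing on `(-∞, 5/4]`,
so the ratio is at most `e^{3C}`; by continuity of `q` it tends to `e^{3C}` as `t → 0+`.
A bound that is attained in the limit is the least upper bound.
-/

open Set Real Filter Topology

theorem isLUB_image_of_forall_le_of_tendsto {α β : Type*} [TopologicalSpace β] [Preorder β]
    [ClosedIicTopology β] {l : Filter α} [l.NeBot] {f : α → β} {s : Set α} {a : β}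
    (hs : s ∈ l) (hle : ∀ x ∈ s, f x ≤ a) (hf : Tendsto f l (𝓝 a)) : IsLUB (f '' s) a :=
  ⟨forall_mem_image.2 hle, fun _ hb =>
    le_of_tendsto hf (mem_of_superset hs fun _ hx => hb (mem_image_of_mem f hx))⟩

theorem mul_exp_le_one_of_le_exp_neg {t x : ℝ} (h : t ≤ exp (-x)) : t * exp x ≤ 1 := by
  simpa [← exp_add] using mul_le_mul_of_nonneg_right h (exp_pos x).le

/-- The Beta(3,3) CDF is `t ↦ t ^ 3 * beta33Quad t`. -/
def beta33Quad (x : ℝ) : ℝ := 10 - 15 * x + 6 * x ^ 2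

theorem beta33Quad_pos (x : ℝ) : 0 < beta33Quad x := by
  unfold beta33Quad
  nlinarith [sq_nonneg (x - 5 / 4)]

theorem beta33Quad_antitoneOn : AntitoneOn beta33Quad (Iic (5 / 4)) := by
  intro a ha b hb hab
  simp only [beta33Quad, mem_Iic] at *
  nlinarith

theorem continuous_beta33Quad : Continuous beta33Quad := by
  unfold beta33Quad
  fun_prop

theorem beta33Quad_mul_div_le_one {t c : ℝ} (ht : 0 ≤ t) (hc : 1 ≤ c) (htc : t * c ≤ 5 / 4) :
    beta33Quad (t * c) / beta33Quad t ≤ 1 :=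
  div_le_one_of_le₀
    (beta33Quad_antitoneOn (htc.trans' (le_mul_of_one_le_right ht hc)) htc
      (le_mul_of_one_le_right ht hc))
    (beta33Quad_pos t).le

theorem tendsto_beta33Quad_mul_div (c : ℝ) :
    Tendsto (fun t => beta33Quad (t * c) / beta33Quad t) (𝓝 0) (𝓝 1) := by
  have hcont : Continuous fun t => beta33Quad (t * c) / beta33Quad t :=
    (continuous_beta33Quad.comp (continuous_mul_const c)).div continuous_beta33Quad
      fun t => (beta33Quad_pos t).ne'
  simpa [div_self (beta33Quad_pos 0).ne'] using hcont.tendsto 0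

/-- In the exponential example, with `G₀*` the Beta(3,3) CDF
`G₀*(t) = t³(10 - 15t + 6t²)` and `G₁*(t) = G₀*(min(t e^C, 1))` for `C > log 4`:
the supremum of `G₁*(t)/G₀*(t)` over `t ∈ (0, e^{-C}]` equals its limit as `t → 0+`,
which is `e^{3C}`. -/
theorem exponential_example_aggregated
    (C : ℝ) (hC : Real.log 4 < C)
    (G₀star G₁star : ℝ → ℝ)
    (hG₀ : G₀star = fun t => t ^ 3 * (10 - 15 * t + 6 * t ^ 2))
    (hG₁ : G₁star = fun t => G₀star (min (t * Real.exp C) 1)) :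
    Tendsto (fun t => G₁star t / G₀star t) (nhdsWithin 0 (Ioi 0))
        (nhds (Real.exp (3 * C))) ∧
      IsLUB ((fun t => G₁star t / G₀star t) '' Ioc (0:ℝ) (Real.exp (-C)))
        (Real.exp (3 * C)) := by
  have hexp3 : exp (3 * C) = exp C ^ 3 := by exact_mod_cast exp_nat_mul C 3
  have hratio : ∀ t ∈ Ioc (0 : ℝ) (exp (-C)),
      G₁star t / G₀star t = exp (3 * C) * (beta33Quad (t * exp C) / beta33Quad t) := by
    rintro t ⟨ht, htC⟩
    simp only [hG₁, hG₀, min_eq_left (mul_exp_le_one_of_le_exp_neg htC), hexp3, beta33Quad]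
    field_simp
  have hmem : Ioc (0 : ℝ) (exp (-C)) ∈ 𝓝[>] 0 := Ioc_mem_nhdsGT (exp_pos _)
  have htend : Tendsto (fun t => G₁star t / G₀star t) (𝓝[>] 0) (𝓝 (exp (3 * C))) := by
    refine Tendsto.congr' (eventuallyEq_of_mem hmem fun t ht => (hratio t ht).symm) ?_
    simpa using ((tendsto_beta33Quad_mul_div (exp C)).mono_left nhdsWithin_le_nhds).const_mul
      (exp (3 * C))
  have hC1 : 1 ≤ exp C := one_le_exp ((log_pos (by norm_num)).trans hC).le
  refine ⟨htend, isLUB_image_of_forall_le_of_tendsto hmem (fun t ht => ?_) htend⟩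
  rw [hratio t ht]
  exact mul_le_of_le_one_right (exp_pos _).le (beta33Quad_mul_div_le_one ht.1.le hC1
    ((mul_exp_le_one_of_le_exp_neg ht.2).trans (by norm_num)))
end
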